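/- Let x_1,...,x_n be real numbers with mean x̄ and λ_2 = 2(1 - cos(π/n)) the smallest nonzero eigenvalue of the path-graph Laplacian on n vertices. Then ∑_{i=1}^{n-1} (x_{i+1} - x_i)^2 ≥ λ_2 ∑_{i=1}^n (x_i - x̄)^2. -/

import Mathlib

/-!
Let `z = x - x̄` and let `y` be its sequence of partial sums, so that `y₀ = yₙ = 0` and `z` is the
difference sequence of `y`. The Dirichlet Laplacian of the path `0, …, n` has the positive
eigenvector `sin (i π / n)` with eigenvalue `λ₂ = 2 - 2 cos (π / n)`, and the ground-state substitution
turns this into the Dirichlet bound `‖z‖² ≥ λ₂ ‖y‖²`. Summation by parts and Cauchy–Schwarz give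
`‖z‖⁴ ≤ ‖Δz‖² ‖y‖²`, and combining the two yields `‖Δz‖² ≥ λ₂ ‖z‖²`.
-/

open Finset Real

theorem sum_range_succ_comp_eq_of_boundary {n : ℕ} {f : ℕ → ℝ} (h0 : f 0 = 0) (hn : f n = 0) :
    ∑ i ∈ range n, f (i + 1) = ∑ i ∈ range n, f i := by
  have h := (sum_range_succ' f n).symm.trans (sum_range_succ f n)
  rwa [h0, hn, add_zero, add_zero] at h

theorem two_mul_mul_le_div_mul_sq_add_div_mul_sq {a b : ℝ} (ha : 0 < a) (hb : 0 < b) (u v : ℝ) :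
    2 * (u * v) ≤ b / a * u ^ 2 + a / b * v ^ 2 := by
  have key : b / a * u ^ 2 + a / b * v ^ 2 - 2 * (u * v) = (b * u - a * v) ^ 2 / (a * b) := by
    field_simp
    ring
  have : 0 ≤ (b * u - a * v) ^ 2 / (a * b) := by positivity
  linarith

/-- Weighted AM–GM on each edge `(i, i + 1)` with weights `s (i + 1) / s i` and `s i / s (i + 1)`;
regrouped by vertex, the weights at `i` add up to `(s (i - 1) + s (i + 1)) / s i ≤ μ`. -/
theorem two_mul_sum_mul_succ_le_of_supersolution {n : ℕ} {μ : ℝ} {s y : ℕ → ℝ}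
    (hs_nonneg : ∀ i ≤ n, 0 ≤ s i) (hs_pos : ∀ i, 0 < i → i < n → 0 < s i)
    (hs_super : ∀ i, 0 < i → i < n → s (i - 1) + s (i + 1) ≤ μ * s i)
    (hy0 : y 0 = 0) (hyn : y n = 0) :
    2 * ∑ i ∈ range n, y i * y (i + 1) ≤ μ * ∑ i ∈ range n, y i ^ 2 := by
  have edge : ∀ i ∈ range n,
      2 * (y i * y (i + 1)) ≤ s (i + 1) / s i * y i ^ 2 + s i / s (i + 1) * y (i + 1) ^ 2 := by
    intro i hi
    rw [mem_range] at hi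
    by_cases hend : i = 0 ∨ i + 1 = n
    · have hzero : y i * y (i + 1) = 0 := by
        rcases hend with rfl | hin
        · rw [hy0, zero_mul]
        · rw [hin, hyn, mul_zero]
      have := hs_nonneg i hi.le
      have := hs_nonneg (i + 1) hi
      rw [hzero, mul_zero]
      positivity
    · simp only [not_or] at hend
      exact two_mul_mul_le_div_mul_sq_add_div_mul_sq (hs_pos i (by omega) hi)
        (hs_pos (i + 1) (by omega) (by omega)) _ _
  have vertex : ∀ i ∈ range n, (s (i + 1) / s i + s (i - 1) / s i) * y i ^ 2 ≤ μ * y i ^ 2 := by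
    intro i hi
    rcases Nat.eq_zero_or_pos i with rfl | hpos
    · simp [hy0]
    have hsi := hs_pos i hpos (mem_range.1 hi)
    gcongr
    rw [← add_div, div_le_iff₀ hsi, add_comm]
    exact hs_super i hpos (mem_range.1 hi)
  let g : ℕ → ℝ := fun j => s (j - 1) / s j * y j ^ 2
  have hshift : ∑ i ∈ range n, g (i + 1) = ∑ i ∈ range n, g i :=
    sum_range_succ_comp_eq_of_boundary (by simp [g, hy0]) (by simp [g, hyn])
  calc 2 * ∑ i ∈ range n, y i * y (i + 1)
      ≤ ∑ i ∈ range n, (s (i + 1) / s i * y i ^ 2 + g (i + 1)) := by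
        rw [mul_sum]
        exact sum_le_sum edge
    _ = ∑ i ∈ range n, (s (i + 1) / s i + s (i - 1) / s i) * y i ^ 2 := by
        rw [sum_add_distrib, hshift, ← sum_add_distrib]
        simp only [g, add_mul]
    _ ≤ μ * ∑ i ∈ range n, y i ^ 2 := by
        rw [mul_sum]
        exact sum_le_sum vertex

theorem sin_sub_add_sin_add (x y : ℝ) : sin (x - y) + sin (x + y) = 2 * cos y * sin x := by
  rw [sin_sub, sin_add]
  ring

theorem dirichlet_poincare_path (n : ℕ) {y : ℕ → ℝ} (hy0 : y 0 = 0) (hyn : y n = 0) :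
    2 * (1 - cos (π / n)) * ∑ i ∈ range n, y i ^ 2 ≤ ∑ i ∈ range n, (y (i + 1) - y i) ^ 2 := by
  have hθ : ∀ i ≤ n, (i : ℝ) * (π / n) ≤ π := by
    intro i hi
    rcases n.eq_zero_or_pos with rfl | hn
    · simp [pi_nonneg]
    calc (i : ℝ) * (π / n) ≤ n * (π / n) := by gcongr
      _ = π := mul_div_cancel₀ π (by positivity)
  have hcross : 2 * ∑ i ∈ range n, y i * y (i + 1) ≤ 2 * cos (π / n) * ∑ i ∈ range n, y i ^ 2 := by
    refine two_mul_sum_mul_succ_le_of_supersolution (s := fun i => sin (i * (π / n)))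
      (fun i hi => sin_nonneg_of_nonneg_of_le_pi (by positivity) (hθ i hi)) ?_ ?_ hy0 hyn
    · intro i hi hin
      have hn : (0 : ℝ) < n := by exact_mod_cast hi.trans hin
      refine sin_pos_of_pos_of_lt_pi (mul_pos (by exact_mod_cast hi) (div_pos pi_pos hn)) ?_
      calc (i : ℝ) * (π / n) < n * (π / n) := by gcongr
        _ = π := mul_div_cancel₀ π hn.ne'
    · intro i hi _
      obtain ⟨j, rfl⟩ : ∃ j, i = j + 1 := ⟨i - 1, by omega⟩
      rw [Nat.add_sub_cancel, ← sin_sub_add_sin_add]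
      apply le_of_eq
      congr 2 <;> push_cast <;> ring
  have hsq : ∑ i ∈ range n, y (i + 1) ^ 2 = ∑ i ∈ range n, y i ^ 2 :=
    sum_range_succ_comp_eq_of_boundary (f := fun i => y i ^ 2) (by simp [hy0]) (by simp [hyn])
  have hexpand : ∑ i ∈ range n, (y (i + 1) - y i) ^ 2
      = ∑ i ∈ range n, y (i + 1) ^ 2 + ∑ i ∈ range n, y i ^ 2
        - 2 * ∑ i ∈ range n, y i * y (i + 1) := by
    rw [mul_sum, ← sum_add_distrib, ← sum_sub_distrib]
    exact sum_congr rfl fun i _ => by ring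
  rw [hexpand, hsq]
  linarith

theorem poincare_of_sum_eq_zero_of_dirichlet {n : ℕ} {c : ℝ}
    (hdir : ∀ y : ℕ → ℝ, y 0 = 0 → y n = 0 →
      c * ∑ i ∈ range n, y i ^ 2 ≤ ∑ i ∈ range n, (y (i + 1) - y i) ^ 2)
    {z : ℕ → ℝ} (hz : ∑ i ∈ range n, z i = 0) :
    c * ∑ i ∈ range n, z i ^ 2 ≤ ∑ i ∈ range (n - 1), (z (i + 1) - z i) ^ 2 := by
  rcases n.eq_zero_or_pos with rfl | hn
  · simp
  let y : ℕ → ℝ := fun k => ∑ i ∈ range k, z i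
  have hy0 : y 0 = 0 := sum_range_zero z
  have hyn : y n = 0 := hz
  set S := ∑ i ∈ range n, z i ^ 2
  set D := ∑ i ∈ range (n - 1), (z (i + 1) - z i) ^ 2
  set Sy := ∑ i ∈ range n, y i ^ 2
  have hdiff : ∀ i, y (i + 1) - y i = z i := fun i => by simp [y, sum_range_succ]
  have hdirichlet : c * Sy ≤ S := by
    simpa only [hdiff] using hdir y hy0 hyn
  have habel : S = -∑ i ∈ range (n - 1), (z (i + 1) - z i) * y (i + 1) := by
    have h := sum_range_by_parts z z n
    simp only [smul_eq_mul, ← sq, hz, mul_zero, zero_sub] at h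
    exact h
  have hshift : ∑ i ∈ range (n - 1), y (i + 1) ^ 2 = Sy := by
    have h := sum_range_succ' (fun i => y i ^ 2) (n - 1)
    rwa [Nat.sub_add_cancel hn, hy0, sq, mul_zero, add_zero, eq_comm] at h
  have hcs : S ^ 2 ≤ D * Sy := by
    rw [habel, neg_sq, ← hshift]
    exact sum_mul_sq_le_sq_mul_sq _ _ _
  have hS : 0 ≤ S := by positivity
  have hD : 0 ≤ D := by positivity
  rcases le_or_gt c 0 with hc | hc
  · exact (mul_nonpos_of_nonpos_of_nonneg hc hS).trans hD
  rcases hS.eq_or_lt with hS0 | hSpos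
  · rwa [← hS0, mul_zero]
  refine le_of_mul_le_mul_right ?_ hSpos
  calc c * S * S = c * S ^ 2 := by ring
    _ ≤ c * (D * Sy) := by gcongr
    _ = D * (c * Sy) := by ring
    _ ≤ D * S := by gcongr

theorem path_laplacian_lower_general (n : ℕ) (x : ℕ → ℝ)
    (xbar : ℝ) (hxbar : xbar = (∑ i ∈ Finset.range n, x i) / n) :
    ∑ i ∈ Finset.range (n - 1), (x (i + 1) - x i) ^ 2
      ≥ 2 * (1 - Real.cos (Real.pi / n)) * ∑ i ∈ Finset.range n, (x i - xbar) ^ 2 := by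
  have hcentered : ∑ i ∈ range n, (x i - xbar) = 0 := by
    rw [sum_sub_distrib, sum_const, card_range, nsmul_eq_mul, hxbar,
      mul_div_cancel_of_imp' fun h => by simp [Nat.cast_eq_zero.1 h], sub_self]
  simpa only [sub_sub_sub_cancel_right, ge_iff_le] using
    poincare_of_sum_eq_zero_of_dirichlet (fun _ => dirichlet_poincare_path n) hcentered

theorem path_laplacian_lower (n : ℕ) (hn : 2 ≤ n) (x : ℕ → ℝ)
    (xbar : ℝ) (hxbar : xbar = (∑ i ∈ Finset.range n, x i) / n) :
    ∑ i ∈ Finset.range (n - 1), (x (i + 1) - x i) ^ 2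
      ≥ 2 * (1 - Real.cos (Real.pi / n)) * ∑ i ∈ Finset.range n, (x i - xbar) ^ 2 :=
  path_laplacian_lower_general n x xbar hxbar
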